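/- arXiv:1907.08827 — 3 statements merged into one kernel-verified Lean document; each statement's English description precedes it below -/
import Mathlib

section
/- For reals μ₁ ≤ μ₂, 0 < σ₁ ≤ σ₂, all v ∈ ℝ, μ ∈ [μ₁, μ₂], σ ∈ [σ₁, σ₂], the inequality (1 - σ²/(4σ₂²))·(v - μ/(1 - σ²/(4σ₂²)))² + (1 - 1/(1 - σ²/(4σ₂²)))·μ² + (σ²/(3σ₁²))·max(μ₁², μ₂²) ≥ 0 holds; equivalently, -v²/(8σ₂²) + max(μ₁²,μ₂²)/(6σ₁²) ≥ -(v-μ)²/(2σ²). -/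
theorem stmt_5 (μ₁ μ₂ σ₁ σ₂ : ℝ) (hμ : μ₁ ≤ μ₂) (hσ₁ : 0 < σ₁) (hσ : σ₁ ≤ σ₂)
    (v μ σ : ℝ) (hμmem : μ ∈ Set.Icc μ₁ μ₂) (hσmem : σ ∈ Set.Icc σ₁ σ₂) :
    (1 - σ ^ 2 / (4 * σ₂ ^ 2)) * (v - μ / (1 - σ ^ 2 / (4 * σ₂ ^ 2))) ^ 2
      + (1 - 1 / (1 - σ ^ 2 / (4 * σ₂ ^ 2))) * μ ^ 2
      + (σ ^ 2 / (3 * σ₁ ^ 2)) * max (μ₁ ^ 2) (μ₂ ^ 2) ≥ 0 ∧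
    -(v ^ 2) / (8 * σ₂ ^ 2) + max (μ₁ ^ 2) (μ₂ ^ 2) / (6 * σ₁ ^ 2)
      ≥ -((v - μ) ^ 2) / (2 * σ ^ 2) := by
  obtain ⟨hμl, hμr⟩ := hμmem
  obtain ⟨hσl, hσr⟩ := hσmem
  have hσ0 : 0 < σ := lt_of_lt_of_le hσ₁ hσl
  have hσ₂0 : 0 < σ₂ := lt_of_lt_of_le hσ₁ hσ
  have hsq : σ ^ 2 ≤ σ₂ ^ 2 := by nlinarith
  have hsq1 : σ₁ ^ 2 ≤ σ₂ ^ 2 := by nlinarith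
  have ha : (3:ℝ)/4 ≤ 1 - σ ^ 2 / (4 * σ₂ ^ 2) := by
    have h : σ ^ 2 / (4 * σ₂ ^ 2) ≤ 1/4 := by
      rw [div_le_div_iff₀ (by positivity) (by norm_num)]
      nlinarith
    linarith
  obtain ⟨a, hadef⟩ : ∃ a, a = 1 - σ ^ 2 / (4 * σ₂ ^ 2) := ⟨_, rfl⟩
  rw [← hadef] at ha ⊢
  have ha0 : 0 < a := lt_of_lt_of_le (by norm_num : (0:ℝ) < 3/4) ha
  obtain ⟨M, hMdef⟩ : ∃ M, M = max (μ₁ ^ 2) (μ₂ ^ 2) := ⟨_, rfl⟩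
  rw [← hMdef]
  have hMμ : μ ^ 2 ≤ M := by
    rcases le_or_gt 0 μ with h | h
    · rw [hMdef]; exact le_max_of_le_right (by nlinarith)
    · rw [hMdef]; exact le_max_of_le_left (by nlinarith)
  have hM0 : 0 ≤ M := le_trans (sq_nonneg μ) hMμ
  have hkey : a * v ^ 2 - 2 * μ * v + μ ^ 2 + σ ^ 2 * M / (3 * σ₁ ^ 2) ≥ 0 := by
    have h1 : (a * v - μ) ^ 2 ≥ 0 := sq_nonneg _
    have h2 : (1 - a) * μ ^ 2 ≤ a * (σ ^ 2 * M / (3 * σ₁ ^ 2)) := by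
      have h1a : 1 - a = σ ^ 2 / (4 * σ₂ ^ 2) := by rw [hadef]; ring
      rw [h1a]
      have e1 : σ ^ 2 / (4 * σ₂ ^ 2) * μ ^ 2 ≤ σ ^ 2 / (4 * σ₁ ^ 2) * M := by
        apply mul_le_mul _ hMμ (sq_nonneg μ) (by positivity)
        apply div_le_div_of_nonneg_left (by positivity) (by positivity)
        nlinarith
      have e2 : σ ^ 2 / (4 * σ₁ ^ 2) * M ≤ a * (σ ^ 2 * M / (3 * σ₁ ^ 2)) := by
        have : σ ^ 2 / (4 * σ₁ ^ 2) * M = (3/4) * (σ ^ 2 * M / (3 * σ₁ ^ 2)) := by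
          field_simp
        rw [this]
        apply mul_le_mul_of_nonneg_right ha (by positivity)
      linarith
    have h3 : 0 ≤ a * (a * v ^ 2 - 2 * μ * v + μ ^ 2 + σ ^ 2 * M / (3 * σ₁ ^ 2)) := by
      nlinarith [h1, h2]
    have h4 := div_nonneg h3 ha0.le
    rwa [mul_div_cancel_left₀ _ (ne_of_gt ha0)] at h4
  constructor
  · have expand : a * (v - μ / a) ^ 2 + (1 - 1 / a) * μ ^ 2 + σ ^ 2 / (3 * σ₁ ^ 2) * M
        = a * v ^ 2 - 2 * μ * v + μ ^ 2 + σ ^ 2 * M / (3 * σ₁ ^ 2) := by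
      field_simp
      ring
    rw [expand]
    exact hkey
  · rw [ge_iff_le, ← sub_nonneg]
    have expand2 : (-(v ^ 2) / (8 * σ₂ ^ 2) + M / (6 * σ₁ ^ 2) - -((v - μ) ^ 2) / (2 * σ ^ 2))
        = (a * v ^ 2 - 2 * μ * v + μ ^ 2 + σ ^ 2 * M / (3 * σ₁ ^ 2)) / (2 * σ ^ 2) := by
      rw [hadef]
      field_simp
      ring
    rw [expand2]
    positivity
end

section
/- Let D be a probability density on ℝ² of the form D(x₁,x₂) = N(x₁; θ₁, 1) · N(x₂; θ₂, E(x₁)), where E(x₁) = exp(exp(c·x₁³)) with c ≠ 0. Then the entropy integrand is not integrable: E_{(x₁,x₂) ~ D}[|log D(x₁,x₂)|] = ∞. -/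
/-!
On the fibre over `x₁` the density `D` is at most `1 / σ` with `σ = exp (exp (c x₁³))`, so
`|log D| ≥ log σ = exp (c x₁³)` there. By Tonelli the entropy integrand therefore dominates
`∫ N(x₁; θ₁, 1) exp (c x₁³) dx₁`, which is infinite: on the side where `c x₁³ → ∞` the cubic
exponent outgrows the Gaussian's quadratic one.
-/

open MeasureTheory

/-- Density of the one-dimensional normal distribution with mean `μ` and
standard deviation `σ`. -/
noncomputable def normalDensity (μ σ v : ℝ) : ℝ :=
  (Real.sqrt (2 * Real.pi) * σ)⁻¹ * Real.exp (-((v - μ) ^ 2) / (2 * σ ^ 2))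

open Real Filter
open scoped ENNReal

lemma normalDensity_eq_gaussianPDFReal (μ : ℝ) {σ : ℝ} (hσ : 0 < σ) (v : ℝ) :
    normalDensity μ σ v = ProbabilityTheory.gaussianPDFReal μ (σ ^ 2).toNNReal v := by
  rw [normalDensity, ProbabilityTheory.gaussianPDFReal, coe_toNNReal _ (sq_nonneg σ),
    sqrt_mul two_pi_pos.le, sqrt_sq hσ.le]

lemma normalDensity_pos (μ : ℝ) {σ : ℝ} (hσ : 0 < σ) (v : ℝ) : 0 < normalDensity μ σ v := by
  unfold normalDensity
  have := sqrt_pos.2 two_pi_pos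
  positivity

lemma normalDensity_le_inv (μ : ℝ) {σ : ℝ} (hσ : 0 < σ) (v : ℝ) :
    normalDensity μ σ v ≤ σ⁻¹ := by
  have h_sqrt : 1 ≤ sqrt (2 * π) := one_le_sqrt.2 (by linarith [pi_gt_three])
  have h_exp : exp (-((v - μ) ^ 2) / (2 * σ ^ 2)) ≤ 1 :=
    exp_le_one_iff.2 (div_nonpos_of_nonpos_of_nonneg (by nlinarith) (by positivity))
  calc normalDensity μ σ v ≤ (sqrt (2 * π) * σ)⁻¹ * 1 :=
        mul_le_mul_of_nonneg_left h_exp (by positivity)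
    _ ≤ σ⁻¹ := by
        rw [mul_one]
        exact inv_anti₀ hσ (le_mul_of_one_le_left hσ.le h_sqrt)

lemma lintegral_normalDensity (μ : ℝ) {σ : ℝ} (hσ : 0 < σ) :
    ∫⁻ v, ENNReal.ofReal (normalDensity μ σ v) = 1 := by
  simp_rw [normalDensity_eq_gaussianPDFReal μ hσ]
  exact ProbabilityTheory.lintegral_gaussianPDFReal_eq_one μ
    (toNNReal_pos.2 (by positivity)).ne'

lemma ofReal_mul_log_le_lintegral_entropy {a : ℝ} (ha₀ : 0 < a) (ha₁ : a ≤ 1) (μ : ℝ) {σ : ℝ}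
    (hσ : 0 < σ) :
    ENNReal.ofReal (a * log σ) ≤
      ∫⁻ v, ENNReal.ofReal (a * normalDensity μ σ v * |log (a * normalDensity μ σ v)|) := by
  calc ENNReal.ofReal (a * log σ)
      = ∫⁻ v, ENNReal.ofReal (a * log σ) * ENNReal.ofReal (normalDensity μ σ v) := by
        rw [lintegral_const_mul' _ _ ENNReal.ofReal_ne_top, lintegral_normalDensity μ hσ, mul_one]
    _ ≤ ∫⁻ v, ENNReal.ofReal (a * normalDensity μ σ v * |log (a * normalDensity μ σ v)|) := by
        refine lintegral_mono fun v => ?_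
        have hg := normalDensity_pos μ hσ v
        have h_log : log σ ≤ |log (a * normalDensity μ σ v)| := by
          have h_le : a * normalDensity μ σ v ≤ σ⁻¹ := by
            nlinarith [normalDensity_le_inv μ hσ v, inv_pos.2 hσ]
          have := log_le_log (by positivity) h_le
          rw [log_inv] at this
          linarith [neg_le_abs (log (a * normalDensity μ σ v))]
        rw [← ENNReal.ofReal_mul' hg.le]
        refine ENNReal.ofReal_le_ofReal ?_
        nlinarith [mul_pos ha₀ hg]

lemma tendsto_cubic_sub_sq_atTop {c : ℝ} (hc : 0 < c) (θ : ℝ) :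
    Tendsto (fun x : ℝ => c * x ^ 3 - (x - θ) ^ 2 / 2) atTop atTop := by
  have h_lower : Tendsto (fun x : ℝ => x ^ 2 * (c * x - 1) - θ ^ 2) atTop atTop :=
    ((tendsto_pow_atTop two_ne_zero).atTop_mul_atTop₀
      ((tendsto_id.const_mul_atTop hc).atTop_add tendsto_const_nhds)).atTop_add
      tendsto_const_nhds
  exact tendsto_atTop_mono (fun x => by nlinarith [sq_nonneg (x + θ)]) h_lower

lemma lintegral_ofReal_eq_top_of_tendsto_atTop {f : ℝ → ℝ} (hf : Tendsto f atTop atTop) :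
    ∫⁻ x, ENNReal.ofReal (f x) = ⊤ := by
  obtain ⟨M, hM⟩ := eventually_atTop.1 (hf.eventually_ge_atTop 1)
  refine eq_top_iff.2 ?_
  calc (⊤ : ℝ≥0∞) = ∫⁻ _ in Set.Ici M, 1 := by simp
    _ ≤ ∫⁻ x in Set.Ici M, ENNReal.ofReal (f x) :=
        setLIntegral_mono' measurableSet_Ici fun x hx => ENNReal.one_le_ofReal.2 (hM x hx)
    _ ≤ ∫⁻ x, ENNReal.ofReal (f x) := setLIntegral_le_lintegral _ _

lemma lintegral_normalDensity_mul_exp_cube_eq_top_of_pos (θ : ℝ) {c : ℝ} (hc : 0 < c) :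
    ∫⁻ x, ENNReal.ofReal (normalDensity θ 1 x * exp (c * x ^ 3)) = ⊤ := by
  have h_eq (x : ℝ) : normalDensity θ 1 x * exp (c * x ^ 3) =
      (sqrt (2 * π))⁻¹ * exp (c * x ^ 3 - (x - θ) ^ 2 / 2) := by
    rw [normalDensity, exp_sub, div_eq_mul_inv (exp _), neg_div, exp_neg]
    ring_nf
  simp_rw [h_eq]
  exact lintegral_ofReal_eq_top_of_tendsto_atTop <|
    (tendsto_exp_atTop.comp (tendsto_cubic_sub_sq_atTop hc θ)).const_mul_atTop
      (inv_pos.2 (sqrt_pos.2 two_pi_pos))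

lemma lintegral_normalDensity_mul_exp_cube_eq_top (θ : ℝ) {c : ℝ} (hc : c ≠ 0) :
    ∫⁻ x, ENNReal.ofReal (normalDensity θ 1 x * exp (c * x ^ 3)) = ⊤ := by
  rcases hc.lt_or_gt with hneg | hpos
  · have h_refl (x : ℝ) : normalDensity θ 1 (-x) * exp (c * (-x) ^ 3) =
        normalDensity (-θ) 1 x * exp (-c * x ^ 3) := by
      simp only [normalDensity]
      ring_nf
    rw [← lintegral_neg_eq_self]
    simp_rw [h_refl]
    exact lintegral_normalDensity_mul_exp_cube_eq_top_of_pos (-θ) (neg_pos.2 hneg)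
  · exact lintegral_normalDensity_mul_exp_cube_eq_top_of_pos θ hpos

theorem stmt_7 (θ₁ θ₂ c : ℝ) (hc : c ≠ 0)
    (D : ℝ × ℝ → ℝ)
    (hD : ∀ x : ℝ × ℝ,
      D x = normalDensity θ₁ 1 x.1 *
        normalDensity θ₂ (Real.exp (Real.exp (c * x.1 ^ 3))) x.2) :
    ∫⁻ x : ℝ × ℝ, ENNReal.ofReal (D x * |Real.log (D x)|) = ⊤ := by
  have hD_meas : Measurable D := by
    rw [funext hD]
    unfold normalDensity
    fun_prop
  have h_meas : Measurable fun x => ENNReal.ofReal (D x * |log (D x)|) := by fun_prop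
  rw [Measure.volume_eq_prod, lintegral_prod _ h_meas.aemeasurable, eq_top_iff,
    ← lintegral_normalDensity_mul_exp_cube_eq_top θ₁ hc]
  refine lintegral_mono fun x₁ => ?_
  simp only [hD]
  simpa only [log_exp] using ofReal_mul_log_le_lintegral_entropy
    (normalDensity_pos θ₁ one_pos x₁) ((normalDensity_le_inv θ₁ one_pos x₁).trans_eq inv_one) θ₂
    (exp_pos (exp (c * x₁ ^ 3)))
end

section
/- Let C(v) = N(v;0,1)·(1_{v>0}·N(0;1,1) + 1_{v≤0}·N(0;-2,1)) and q_θ(v) = (1/2)·1_{θ-1 ≤ v ≤ θ+1} be the uniform density on [θ-1, θ+1]. Then for all θ ∉ {-1, 1}, the gradient of F(θ) := ∫ q_θ(v)·log(q_θ(v)/C(v)) dv equals θ/25 − 1_{-1 ≤ θ ≤ 1}·(1/2)·log(N(0;1,1)/N(0;-2,1)), which is nonzero for all θ ∈ ℝ \ {-1, 1}. -/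
open MeasureTheory

/-- Model density: prior `N(0,5)` with likelihood `N(0;1,1)` for `v > 0`
and `N(0;-2,1)` for `v ≤ 0`. -/
noncomputable def modelC (v : ℝ) : ℝ :=
  normalDensity 0 5 v *
    (if 0 < v then normalDensity 1 1 0 else normalDensity (-2) 1 0)

/-- Guide density: uniform on `[θ-1, θ+1]`. -/
noncomputable def guideQ (θ v : ℝ) : ℝ :=
  if θ - 1 ≤ v ∧ v ≤ θ + 1 then 1 / 2 else 0

noncomputable def phiF (v : ℝ) : ℝ := (1 / 2 : ℝ) * Real.log ((1 / 2) / modelC v)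

lemma nd_pos {μ σ : ℝ} (hσ : 0 < σ) (v : ℝ) : 0 < normalDensity μ σ v := by
  unfold normalDensity
  have h2 : (0:ℝ) < Real.sqrt (2 * Real.pi) := Real.sqrt_pos.2 (by positivity)
  exact mul_pos (inv_pos.2 (mul_pos h2 hσ)) (Real.exp_pos _)

lemma integrand_eq (t v : ℝ) :
    guideQ t v * Real.log (guideQ t v / modelC v)
      = Set.indicator (Set.Icc (t - 1) (t + 1)) phiF v := by
  rw [Set.indicator_apply]
  by_cases h : v ∈ Set.Icc (t - 1) (t + 1)
  · rw [if_pos h]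
    have : guideQ t v = 1 / 2 := by
      unfold guideQ; rw [if_pos (Set.mem_Icc.1 h)]
    rw [this]; rfl
  · rw [if_neg h]
    have : guideQ t v = 0 := by
      unfold guideQ; rw [if_neg (fun hc => h (Set.mem_Icc.2 hc))]
    rw [this]; ring

lemma phiF_eq (v : ℝ) : phiF v =
    (1 / 2) * (Real.log (1 / 2) - Real.log ((Real.sqrt (2 * Real.pi) * 5)⁻¹))
      + v ^ 2 / 100
      - (1 / 2) * (if 0 < v then Real.log (normalDensity 1 1 0)
          else Real.log (normalDensity (-2) 1 0)) := by
  unfold phiF modelC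
  have h1 : (0:ℝ) < normalDensity 0 5 v := nd_pos (by norm_num) v
  have h2 : (0:ℝ) < (if 0 < v then normalDensity 1 1 0 else normalDensity (-2) 1 0) := by
    split_ifs <;> exact nd_pos one_pos 0
  rw [Real.log_div (by norm_num) (ne_of_gt (mul_pos h1 h2)),
      Real.log_mul (ne_of_gt h1) (ne_of_gt h2)]
  have h3 : Real.log (normalDensity 0 5 v)
      = Real.log ((Real.sqrt (2 * Real.pi) * 5)⁻¹) + (-(v ^ 2) / 50) := by
    unfold normalDensity
    have hc : (0:ℝ) < (Real.sqrt (2 * Real.pi) * 5)⁻¹ := by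
      have h2' : (0:ℝ) < Real.sqrt (2 * Real.pi) := Real.sqrt_pos.2 (by positivity)
      positivity
    rw [Real.log_mul (ne_of_gt hc) (Real.exp_ne_zero _), Real.log_exp]
    norm_num
  have h4 : Real.log (if 0 < v then normalDensity 1 1 0 else normalDensity (-2) 1 0)
      = (if 0 < v then Real.log (normalDensity 1 1 0) else Real.log (normalDensity (-2) 1 0)) := by
    split_ifs <;> rfl
  rw [h3, h4]; ring

/-- decomposition into a continuous part and a constant indicator part -/
lemma phiF_decomp : phiF = fun v =>
    ((1 / 2) * (Real.log (1 / 2) - Real.log ((Real.sqrt (2 * Real.pi) * 5)⁻¹))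
      + v ^ 2 / 100 - (1 / 2) * Real.log (normalDensity (-2) 1 0))
    + Set.indicator (Set.Ioi (0:ℝ))
        (fun _ => (1 / 2) * Real.log (normalDensity (-2) 1 0)
          - (1 / 2) * Real.log (normalDensity 1 1 0)) v := by
  funext v
  rw [phiF_eq, Set.indicator_apply]
  by_cases h : v ∈ Set.Ioi (0:ℝ)
  · rw [if_pos h, if_pos (Set.mem_Ioi.1 h)]; ring
  · rw [if_neg h, if_neg (fun hc => h (Set.mem_Ioi.2 hc))]; ring

lemma phiF_meas : Measurable phiF := by
  rw [phiF_decomp]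
  apply Measurable.add
  · fun_prop
  · exact (measurable_const (a := (1 / 2) * Real.log (normalDensity (-2) 1 0)
      - (1 / 2) * Real.log (normalDensity 1 1 0))).indicator measurableSet_Ioi

lemma phiF_intInt (a b : ℝ) : IntervalIntegrable phiF volume a b := by
  rw [phiF_decomp]
  apply IntervalIntegrable.add
  · exact (by fun_prop : Continuous fun v : ℝ =>
      ((1 / 2) * (Real.log (1 / 2) - Real.log ((Real.sqrt (2 * Real.pi) * 5)⁻¹))
        + v ^ 2 / 100 - (1 / 2) * Real.log (normalDensity (-2) 1 0))).intervalIntegrable a b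
  · rw [intervalIntegrable_iff]
    exact (MeasureTheory.integrableOn_const measure_Ioc_lt_top.ne).indicator
      measurableSet_Ioi

lemma phiF_contAt {x : ℝ} (hx : x ≠ 0) : ContinuousAt phiF x := by
  rw [phiF_decomp]
  apply ContinuousAt.add
  · fun_prop
  · rcases hx.lt_or_gt with h | h
    · apply continuousAt_const.congr
      filter_upwards [Iio_mem_nhds h] with v hv
      rw [Set.indicator_of_notMem (by simp at hv ⊢; linarith) ]
    · apply continuousAt_const.congr
      filter_upwards [Ioi_mem_nhds h] with v hv
      rw [Set.indicator_of_mem hv]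

theorem stmt_13 (θ : ℝ) (hθ : θ ≠ -1 ∧ θ ≠ 1) :
    HasDerivAt
      (fun t : ℝ => ∫ v : ℝ, guideQ t v * Real.log (guideQ t v / modelC v))
      (θ / 25 -
        (if -1 ≤ θ ∧ θ ≤ 1 then
          (1 / 2) * Real.log (normalDensity 1 1 0 / normalDensity (-2) 1 0)
         else 0)) θ ∧
    (θ / 25 -
        (if -1 ≤ θ ∧ θ ≤ 1 then
          (1 / 2) * Real.log (normalDensity 1 1 0 / normalDensity (-2) 1 0)
         else 0)) ≠ 0 := by
  obtain ⟨hθ1, hθ2⟩ := hθ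
  have ha : (0:ℝ) < normalDensity 1 1 0 := nd_pos one_pos 0
  have hb : (0:ℝ) < normalDensity (-2) 1 0 := nd_pos one_pos 0
  have hlogdiv : Real.log (normalDensity 1 1 0 / normalDensity (-2) 1 0)
      = Real.log (normalDensity 1 1 0) - Real.log (normalDensity (-2) 1 0) :=
    Real.log_div (ne_of_gt ha) (ne_of_gt hb)
  set D : ℝ := θ / 25 -
      (if -1 ≤ θ ∧ θ ≤ 1 then
        (1 / 2) * Real.log (normalDensity 1 1 0 / normalDensity (-2) 1 0)
       else 0) with hD
  constructor
  · -- derivative part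
    have key : (fun t : ℝ => ∫ v : ℝ, guideQ t v * Real.log (guideQ t v / modelC v))
        = fun t => (∫ v in (0:ℝ)..(t+1), phiF v) - (∫ v in (0:ℝ)..(t-1), phiF v) := by
      funext t
      have h1 : (∫ v : ℝ, guideQ t v * Real.log (guideQ t v / modelC v))
          = ∫ v in Set.Icc (t-1) (t+1), phiF v := by
        simp_rw [integrand_eq]
        exact integral_indicator measurableSet_Icc
      rw [h1, integral_Icc_eq_integral_Ioc,
        ← intervalIntegral.integral_of_le (by linarith : t - 1 ≤ t + 1),
        ← intervalIntegral.integral_add_adjacent_intervals (phiF_intInt (t-1) 0)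
          (phiF_intInt 0 (t+1)),
        intervalIntegral.integral_symm 0 (t-1)]
      ring
    rw [key]
    have hmeas : ∀ x : ℝ, StronglyMeasurableAtFilter phiF (nhds x) :=
      fun x => phiF_meas.stronglyMeasurable.stronglyMeasurableAtFilter
    have hd1 : HasDerivAt (fun x => ∫ v in (0:ℝ)..x, phiF v) (phiF (θ+1)) (θ+1) :=
      intervalIntegral.integral_hasDerivAt_right (phiF_intInt 0 (θ+1)) (hmeas _)
        (phiF_contAt (by intro h; apply hθ1; linarith))
    have hd2 : HasDerivAt (fun x => ∫ v in (0:ℝ)..x, phiF v) (phiF (θ-1)) (θ-1) :=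
      intervalIntegral.integral_hasDerivAt_right (phiF_intInt 0 (θ-1)) (hmeas _)
        (phiF_contAt (by intro h; apply hθ2; linarith))
    have hc1 : HasDerivAt (fun t : ℝ => ∫ v in (0:ℝ)..(t+1), phiF v) (phiF (θ+1) * 1) θ :=
      by have := hd1.comp θ ((hasDerivAt_id θ).add_const 1); exact this
    have hc2 : HasDerivAt (fun t : ℝ => ∫ v in (0:ℝ)..(t-1), phiF v) (phiF (θ-1) * 1) θ :=
      by have := hd2.comp θ ((hasDerivAt_id θ).sub_const 1); exact this
    have hval : phiF (θ+1) * 1 - phiF (θ-1) * 1 = D := by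
      rw [mul_one, mul_one, phiF_eq, phiF_eq, hD]
      by_cases h : -1 ≤ θ ∧ θ ≤ 1
      · have h1 : (0:ℝ) < θ + 1 := by
          rcases lt_of_le_of_ne h.1 (Ne.symm hθ1) with h'; linarith
        have h2 : ¬ (0:ℝ) < θ - 1 := by
          rcases lt_of_le_of_ne h.2 hθ2 with h'; linarith
        rw [if_pos h1, if_neg h2, if_pos h, hlogdiv]; ring
      · rw [if_neg h]
        rcases not_and_or.1 h with h' | h'
        · have h1 : ¬ (0:ℝ) < θ + 1 := by push_neg at h' ⊢; linarith
          have h2 : ¬ (0:ℝ) < θ - 1 := by push_neg at h' ⊢; linarith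
          rw [if_neg h1, if_neg h2]; ring
        · have h1 : (0:ℝ) < θ + 1 := by push_neg at h'; linarith
          have h2 : (0:ℝ) < θ - 1 := by push_neg at h'; linarith
          rw [if_pos h1, if_pos h2]; ring
    rw [← hval]
    exact hc1.sub hc2
  · -- nonzero part
    rw [hD]
    by_cases h : -1 ≤ θ ∧ θ ≤ 1
    · rw [if_pos h]
      have hratio : normalDensity 1 1 0 / normalDensity (-2) 1 0 = Real.exp (3/2) := by
        unfold normalDensity
        rw [mul_div_mul_left _ _ (by
          have h2' : (0:ℝ) < Real.sqrt (2 * Real.pi) := Real.sqrt_pos.2 (by positivity)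
          positivity : ((Real.sqrt (2 * Real.pi) * 1)⁻¹ : ℝ) ≠ 0), ← Real.exp_sub]
        norm_num
      rw [hratio, Real.log_exp]
      intro hc
      have : θ = 75 / 4 := by linarith
      linarith [h.2]
    · rw [if_neg h]
      rcases not_and_or.1 h with h' | h' <;> push_neg at h' <;> intro hc
      · have : θ = 0 := by linarith
        linarith
      · have : θ = 0 := by linarith
        linarith
end
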